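/- The key order estimate in Theorem 9.9(1) of the paper (convergence of the series Ψ(ħ)): let n ≥ 1, let c(n) = 1 if n is even and c(n) = 0 if n is odd, and in ℚ⟦X⟧ set β = Σ_{d ∣ n, d ≥ 2} φ(d)·X^{n − n/d} (a polynomial; φ is Euler's totient function). Then the formal power series (1 + β + (n/2)·Xⁿ)·log(1+β) − β − (c(n)/2)·Xⁿ has order at least n + ⌈n/6⌉; that is, all its coefficients in degrees strictly below n + ⌈n/6⌉ vanish. -/

import Mathlib

open PowerSeries

/-- Substitution `f ∘ a` of a power series `a` with zero constant term into a power
series `f`: the coefficient of `Xⁿ` in `f ∘ a` is `Σ_{k ≤ n} fₖ · (coeff of Xⁿ in aᵏ)`. -/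
noncomputable def PowerSeries.substQ (a f : PowerSeries ℚ) : PowerSeries ℚ :=
  PowerSeries.mk fun n =>
    ∑ k ∈ Finset.range (n + 1), PowerSeries.coeff (R := ℚ) k f * PowerSeries.coeff (R := ℚ) n (a ^ k)

/-- The formal power series `log(1+X) = Σ_{k≥1} (−1)^{k−1} Xᵏ/k ∈ ℚ⟦X⟧`. -/
noncomputable def PowerSeries.logOneAdd : PowerSeries ℚ :=
  PowerSeries.mk fun k => if k = 0 then 0 else (-1) ^ (k + 1) / k

/-- The key order estimate in Theorem 9.9(1): for `n ≥ 1`, with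
`c(n) = 1` for `n` even and `0` for `n` odd, and
`β = Σ_{d ∣ n, d ≥ 2} φ(d)·X^{n − n/d} ∈ ℚ⟦X⟧`, the formal power series
`(1 + β + (n/2)·Xⁿ)·log(1+β) − β − (c(n)/2)·Xⁿ` has order at least `n + ⌈n/6⌉`:
all its coefficients in degrees strictly below `n + ⌈n/6⌉` vanish. -/
theorem order_estimate_theorem_nine_nine (n : ℕ) (hn : 1 ≤ n) :
    ∀ m < n + (n + 5) / 6,
      PowerSeries.coeff (R := ℚ) m
        ((1 + (∑ d ∈ n.divisors.filter (fun d => 2 ≤ d),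
                 PowerSeries.C (R := ℚ) (d.totient : ℚ) * PowerSeries.X ^ (n - n / d))
            + PowerSeries.C (R := ℚ) ((n : ℚ) / 2) * PowerSeries.X ^ n)
          * PowerSeries.substQ
              (∑ d ∈ n.divisors.filter (fun d => 2 ≤ d),
                 PowerSeries.C (R := ℚ) (d.totient : ℚ) * PowerSeries.X ^ (n - n / d))
              PowerSeries.logOneAdd
          - (∑ d ∈ n.divisors.filter (fun d => 2 ≤ d),
               PowerSeries.C (R := ℚ) (d.totient : ℚ) * PowerSeries.X ^ (n - n / d))
          - PowerSeries.C (R := ℚ) ((if Even n then (1 : ℚ) else 0) / 2) * PowerSeries.X ^ n) = 0 := by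
  classical
  set N := n + (n + 5) / 6 with hNdef
  set β : PowerSeries ℚ := ∑ d ∈ n.divisors.filter (fun d => 2 ≤ d),
      PowerSeries.C (R := ℚ) (d.totient : ℚ) * PowerSeries.X ^ (n - n / d) with hβdef
  set G := PowerSeries.substQ β PowerSeries.logOneAdd with hGdef
  have hC2 : (PowerSeries.C (R := ℚ)) (2 : ℚ) = 2 := map_ofNat _ 2
  -- X^(n - n/2) divides β
  have hsβ : (X : ℚ⟦X⟧) ^ (n - n / 2) ∣ β := by
    rw [hβdef]
    apply Finset.dvd_sum
    intro d hd
    simp only [Finset.mem_filter, Nat.mem_divisors] at hd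
    have h1 : n / d ≤ n / 2 := Nat.div_le_div_left hd.2 (by norm_num)
    exact Dvd.dvd.mul_left (pow_dvd_pow X (by omega)) _
  set β₃ : ℚ⟦X⟧ := ∑ d ∈ n.divisors.filter (fun d => 3 ≤ d),
      PowerSeries.C (R := ℚ) (d.totient : ℚ) * PowerSeries.X ^ (n - n / d) with hβ₃def
  set β₂ : ℚ⟦X⟧ := if 2 ∣ n then (PowerSeries.X : ℚ⟦X⟧) ^ (n - n / 2) else 0 with hβ₂def
  have d3 : (X : ℚ⟦X⟧) ^ (n - n / 3) ∣ β₃ := by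
    rw [hβ₃def]
    apply Finset.dvd_sum
    intro d hd
    simp only [Finset.mem_filter, Nat.mem_divisors] at hd
    have h1 : n / d ≤ n / 3 := Nat.div_le_div_left hd.2 (by norm_num)
    exact Dvd.dvd.mul_left (pow_dvd_pow X (by omega)) _
  have hsplit : β = β₂ + β₃ := by
    rw [hβdef, hβ₂def, hβ₃def]
    rw [← Finset.sum_filter_add_sum_filter_not (n.divisors.filter fun d => 2 ≤ d)
        (fun d => d = 2)]
    congr 1
    · rw [Finset.filter_filter]
      have h1 : (n.divisors.filter fun d => 2 ≤ d ∧ d = 2)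
          = n.divisors.filter (fun d => d = 2) := by
        ext d
        simp only [Finset.mem_filter]
        constructor
        · rintro ⟨h, _, h2⟩; exact ⟨h, h2⟩
        · rintro ⟨h, h2⟩; exact ⟨h, by omega, h2⟩
      rw [h1, Finset.filter_eq']
      by_cases h2 : 2 ∣ n
      · rw [if_pos (Nat.mem_divisors.mpr ⟨h2, by omega⟩), if_pos h2, Finset.sum_singleton]
        norm_num [Nat.totient_two]
      · rw [if_neg (by simp [Nat.mem_divisors, h2]), if_neg h2, Finset.sum_empty]
    · rw [Finset.filter_filter]
      apply Finset.sum_congr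
      · ext d
        simp only [Finset.mem_filter]
        constructor
        · rintro ⟨h1, h2, h3⟩; exact ⟨h1, by omega⟩
        · rintro ⟨h1, h2⟩; exact ⟨h1, by omega, by omega⟩
      · intros; rfl
  have h5 : (X : ℚ⟦X⟧) ^ N ∣ β ^ 2 - β₂ ^ 2 := by
    have e : β ^ 2 - β₂ ^ 2 = β₃ * (β₃ + β₂ + β₂) := by rw [hsplit]; ring
    rw [e]
    have hb2 : (X : ℚ⟦X⟧) ^ (n - n / 2) ∣ β₂ := by
      rw [hβ₂def]
      split
      · exact dvd_rfl
      · exact dvd_zero _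
    have hb3 : (X : ℚ⟦X⟧) ^ (n - n / 2) ∣ β₃ := dvd_trans (pow_dvd_pow X (by omega)) d3
    have d2 : (X : ℚ⟦X⟧) ^ (n - n / 2) ∣ β₃ + β₂ + β₂ := dvd_add (dvd_add hb3 hb2) hb2
    calc (X : ℚ⟦X⟧) ^ N ∣ (X : ℚ⟦X⟧) ^ ((n - n / 3) + (n - n / 2)) := pow_dvd_pow X (by omega)
      _ ∣ β₃ * (β₃ + β₂ + β₂) := by rw [pow_add]; exact mul_dvd_mul d3 d2
  have hcube : (X : ℚ⟦X⟧) ^ N ∣ β ^ 3 := by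
    refine dvd_trans (pow_dvd_pow X (show N ≤ (n - n / 2) * 3 by omega)) ?_
    rw [pow_mul]
    exact pow_dvd_pow_of_dvd hsβ 3
  have hXnβ : (X : ℚ⟦X⟧) ^ N ∣ (X : ℚ⟦X⟧) ^ n * β := by
    refine dvd_trans (pow_dvd_pow X (show N ≤ n + (n - n / 2) by omega)) ?_
    rw [pow_add]
    exact mul_dvd_mul_left _ hsβ
  have hβ1 : (X : ℚ⟦X⟧) ^ 1 ∣ β := dvd_trans (pow_dvd_pow X (by omega)) hsβ
  have hG : (X : ℚ⟦X⟧) ^ N ∣ (2 * G - 2 * β + β ^ 2) := by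
    rw [PowerSeries.X_pow_dvd_iff]
    intro m hm
    have hc3 : ∀ k, 3 ≤ k → (coeff (R := ℚ) m) (β ^ k) = 0 := fun k hk =>
      PowerSeries.X_pow_dvd_iff.mp (dvd_trans hcube (pow_dvd_pow β hk)) m hm
    have hcb0 : (coeff (R := ℚ) 0) β = 0 := PowerSeries.X_pow_dvd_iff.mp hβ1 0 (by norm_num)
    have hcb2 : ∀ j, j < 2 → (coeff (R := ℚ) j) (β ^ 2) = 0 := by
      intro j hj
      refine PowerSeries.X_pow_dvd_iff.mp ?_ j hj
      have h := pow_dvd_pow_of_dvd hβ1 2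
      rwa [← pow_mul, one_mul] at h
    have cG : (coeff (R := ℚ) m) G = (coeff (R := ℚ) m) β - (1 / 2) * (coeff (R := ℚ) m) (β ^ 2) := by
      rw [hGdef, PowerSeries.substQ, PowerSeries.coeff_mk]
      have step : ∀ k ∈ Finset.range (m + 1),
          (coeff (R := ℚ) k) PowerSeries.logOneAdd * (coeff (R := ℚ) m) (β ^ k)
          = (if k = 1 then (coeff (R := ℚ) m) β else 0)
            + (if k = 2 then (-(1 / 2)) * (coeff (R := ℚ) m) (β ^ 2) else 0) := by
        intro k _
        rcases k with _ | _ | _ | k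
        · simp [PowerSeries.logOneAdd, PowerSeries.coeff_mk]
        · norm_num [PowerSeries.logOneAdd, PowerSeries.coeff_mk]
        · norm_num [PowerSeries.logOneAdd, PowerSeries.coeff_mk]
        · rw [if_neg (by omega), if_neg (by omega)]
          simp [hc3 (k + 3) (by omega)]
      rw [Finset.sum_congr rfl step, Finset.sum_add_distrib,
        Finset.sum_ite_eq' (Finset.range (m + 1)) 1 (fun _ => (coeff (R := ℚ) m) β),
        Finset.sum_ite_eq' (Finset.range (m + 1)) 2
          (fun _ => (-(1 / 2)) * (coeff (R := ℚ) m) (β ^ 2))]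
      simp only [Finset.mem_range]
      split_ifs with h1 h2 h2
      · ring
      · rw [hcb2 m (by omega)]; ring
      · omega
      · have hm0 : m = 0 := by omega
        subst hm0
        rw [hcb0, hcb2 0 (by norm_num)]
        ring
    rw [map_add, map_sub]
    have c2G : (coeff (R := ℚ) m) (2 * G) = 2 * (coeff (R := ℚ) m) G := by
      rw [← hC2, PowerSeries.coeff_C_mul]
    have c2β : (coeff (R := ℚ) m) (2 * β) = 2 * (coeff (R := ℚ) m) β := by
      rw [← hC2, PowerSeries.coeff_C_mul]
    rw [c2G, c2β, cG]
    ring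
  have hκ : 2 * (PowerSeries.C (R := ℚ) ((if Even n then (1 : ℚ) else 0) / 2) * (X : ℚ⟦X⟧) ^ n)
      = β₂ ^ 2 := by
    by_cases he : Even n
    · have h2 : 2 ∣ n := by rw [Nat.even_iff] at he; omega
      simp only [he, if_true]
      rw [hβ₂def, if_pos h2, ← pow_mul, ← hC2, ← mul_assoc, ← map_mul,
        show (2 : ℚ) * (1 / 2) = 1 from by norm_num, map_one, one_mul]
      congr 1
      omega
    · have h2 : ¬ 2 ∣ n := by rw [Nat.even_iff] at he; omega
      simp only [he, if_false]
      rw [hβ₂def, if_neg h2]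
      norm_num
  rw [← PowerSeries.X_pow_dvd_iff]
  obtain ⟨q1, e1⟩ := hG
  obtain ⟨q2, e2⟩ := hcube
  obtain ⟨q3, e3⟩ := hXnβ
  obtain ⟨q5, e5⟩ := h5
  have key : 2 * ((1 + β + PowerSeries.C (R := ℚ) ((n : ℚ) / 2) * (X : ℚ⟦X⟧) ^ n) * G - β
      - PowerSeries.C (R := ℚ) ((if Even n then (1 : ℚ) else 0) / 2) * (X : ℚ⟦X⟧) ^ n)
      = (X : ℚ⟦X⟧) ^ N * ((1 + β + PowerSeries.C (R := ℚ) ((n : ℚ) / 2) * (X : ℚ⟦X⟧) ^ n) * q1 + q5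
          + 2 * PowerSeries.C (R := ℚ) ((n : ℚ) / 2) * q3 - q2
          - PowerSeries.C (R := ℚ) ((n : ℚ) / 2) * q3 * β) := by
    linear_combination (1 + β + PowerSeries.C (R := ℚ) ((n : ℚ) / 2) * (X : ℚ⟦X⟧) ^ n) * e1 + e5
      + (2 * PowerSeries.C (R := ℚ) ((n : ℚ) / 2) - PowerSeries.C (R := ℚ) ((n : ℚ) / 2) * β) * e3
      - e2 - hκ
  have hd2 : (X : ℚ⟦X⟧) ^ N ∣
      2 * ((1 + β + PowerSeries.C (R := ℚ) ((n : ℚ) / 2) * (X : ℚ⟦X⟧) ^ n) * G - β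
        - PowerSeries.C (R := ℚ) ((if Even n then (1 : ℚ) else 0) / 2) * (X : ℚ⟦X⟧) ^ n) :=
    ⟨_, key⟩
  have hhalf : ((1 + β + PowerSeries.C (R := ℚ) ((n : ℚ) / 2) * (X : ℚ⟦X⟧) ^ n) * G - β
      - PowerSeries.C (R := ℚ) ((if Even n then (1 : ℚ) else 0) / 2) * (X : ℚ⟦X⟧) ^ n)
      = PowerSeries.C (R := ℚ) (1 / 2) *
        (2 * ((1 + β + PowerSeries.C (R := ℚ) ((n : ℚ) / 2) * (X : ℚ⟦X⟧) ^ n) * G - β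
          - PowerSeries.C (R := ℚ) ((if Even n then (1 : ℚ) else 0) / 2) * (X : ℚ⟦X⟧) ^ n)) := by
    rw [← mul_assoc, ← hC2, ← map_mul, show (1 / 2 : ℚ) * 2 = 1 from by norm_num, map_one,
      one_mul]
  rw [hhalf]
  exact hd2.mul_left _
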